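/- arXiv:math/0703674 — 3 statements merged into one kernel-verified Lean document; each statement's English description precedes it below -/
import Mathlib

section
/- Let (G_n)_{n∈ℕ} be a sequence of abelian groups, let P = ∏_{n∈ℕ} G_n be their direct product, let S ≤ P be the subgroup of finitely supported elements (those x ∈ P with x_n = 0 for all but finitely many n), and let ε : P → P/S be the quotient homomorphism. Then for every abelian group G, every group homomorphism α : G → P/S, and every finitely generated subgroup H of G, there exists a group homomorphism β : H → P such that ε ∘ β agrees with α on H. -/
/-- For a sequence of abelian groups `G n`, with `S` the subgroup of
finitely supported elements of the product `∀ n, G n`, every homomorphism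
`α : G' →+ (∀ n, G n) ⧸ S` lifts across the quotient map on any finitely generated
subgroup `H` of `G'`. -/
theorem stmt0 (G : ℕ → Type*) [∀ n, AddCommGroup (G n)]
    (S : AddSubgroup (∀ n, G n))
    (hS : ∀ x : ∀ n, G n, x ∈ S ↔ {n | x n ≠ 0}.Finite)
    (G' : Type*) [AddCommGroup G'] (α : G' →+ (∀ n, G n) ⧸ S)
    (H : AddSubgroup G') (hH : H.FG) :
    ∃ β : H →+ (∀ n, G n),
      ∀ h : H, QuotientAddGroup.mk' S (β h) = α (h : G') := by
  classical
  haveI : Module.Finite ℤ H :=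
    Module.Finite.iff_addGroup_fg.mpr ((AddGroup.fg_iff_addSubgroup_fg H).mpr hH)
  obtain ⟨n, f, hf⟩ := Module.Finite.exists_fin' ℤ (H : Type _)
  -- ε and α as linear maps
  set P := ∀ n, G n
  set ε : P →ₗ[ℤ] P ⧸ S := (QuotientAddGroup.mk' S).toIntLinearMap
  set α' : H →ₗ[ℤ] P ⧸ S := (α.comp H.subtype).toIntLinearMap
  -- choose lifts of the images of basis vectors
  have hsurj : Function.Surjective ε := QuotientAddGroup.mk'_surjective S
  choose q hq using fun i : Fin n => hsurj (α' (f (Pi.single i 1)))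
  set b : Module.Basis (Fin n) ℤ (Fin n → ℤ) := Pi.basisFun ℤ (Fin n)
  set γ : (Fin n → ℤ) →ₗ[ℤ] P := b.constr ℤ q
  have hγ : ε.comp γ = α'.comp f := by
    apply b.ext
    intro i
    simp only [LinearMap.comp_apply, γ, Module.Basis.constr_basis]
    rw [hq i]
    congr 1
    simp [b, Pi.basisFun_apply]
  -- the kernel of f is finitely generated
  obtain ⟨t, ht⟩ : (LinearMap.ker f).FG := IsNoetherian.noetherian _
  -- bound the supports of the images of generators
  have hfin : ∀ k ∈ t, {m | γ k m ≠ 0}.Finite := by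
    intro k hk
    have hk' : k ∈ LinearMap.ker f := by
      rw [← ht]; exact Submodule.subset_span hk
    have h1 : (ε.comp γ) k = (α'.comp f) k := LinearMap.congr_fun hγ k
    simp only [LinearMap.comp_apply] at h1
    have h2 : ε (γ k) = 0 := by rw [h1, LinearMap.mem_ker.mp hk', map_zero]
    exact (hS (γ k)).mp ((QuotientAddGroup.eq_zero_iff (γ k)).mp h2)
  have hbig : (⋃ k ∈ t, {m | γ k m ≠ 0}).Finite :=
    Set.Finite.biUnion t.finite_toSet hfin
  obtain ⟨N, hN⟩ : ∃ N : ℕ, ∀ m ∈ ⋃ k ∈ t, {m | γ k m ≠ 0}, m < N := by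
    obtain ⟨N, hN⟩ := hbig.bddAbove
    exact ⟨N + 1, fun m hm => Nat.lt_succ_of_le (hN hm)⟩
  -- all elements of ker f map into coordinates < N
  have hker : ∀ x ∈ LinearMap.ker f, ∀ m, N ≤ m → γ x m = 0 := by
    intro x hx m hm
    have hle : LinearMap.ker f ≤ LinearMap.ker ((LinearMap.proj m).comp γ) := by
      rw [← ht, Submodule.span_le]
      intro k hk
      simp only [SetLike.mem_coe, LinearMap.mem_ker, LinearMap.comp_apply, LinearMap.proj_apply]
      by_contra h
      exact absurd (hN m (Set.mem_biUnion hk h)) (not_lt.mpr hm)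
    have := hle hx
    simpa using this
  -- truncation
  set T : P →ₗ[ℤ] P :=
    { toFun := fun p => fun m => if m < N then 0 else p m
      map_add' := by
        intro p r; funext m
        show (if m < N then 0 else (p + r) m)
            = (if m < N then 0 else p m) + (if m < N then 0 else r m)
        by_cases h : m < N
        · simp [h]
        · simp only [if_neg h]; rfl
      map_smul' := by
        intro c p; funext m
        show (if m < N then 0 else (c • p) m) = c • (if m < N then 0 else p m)
        by_cases h : m < N
        · simp [h]
        · simp only [if_neg h]; rfl }
  set γ' : (Fin n → ℤ) →ₗ[ℤ] P := T.comp γ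
  have hker' : LinearMap.ker f ≤ LinearMap.ker γ' := by
    intro x hx
    simp only [LinearMap.mem_ker, γ', LinearMap.comp_apply]
    funext m
    show (if m < N then 0 else γ x m) = 0
    by_cases h : m < N
    · rw [if_pos h]
    · rw [if_neg h]
      exact hker x hx m (not_lt.mp h)
  set e := f.quotKerEquivOfSurjective hf
  set β : H →ₗ[ℤ] P := ((LinearMap.ker f).liftQ γ' hker').comp e.symm.toLinearMap
  refine ⟨β.toAddMonoidHom, fun h => ?_⟩
  obtain ⟨y, hy⟩ := Submodule.Quotient.mk_surjective (LinearMap.ker f) (e.symm h)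
  have hfy : f y = (h : H) := by
    have : e (Submodule.Quotient.mk y) = f y := rfl
    rw [hy] at this
    rw [← this, LinearEquiv.apply_symm_apply]
  have hβ : β h = γ' y := by
    simp only [β, LinearMap.comp_apply, LinearEquiv.coe_toLinearMap, ← hy,
      Submodule.liftQ_apply]
  have hdiff : γ' y - γ y ∈ S := by
    rw [hS]
    apply Set.Finite.subset (Set.finite_Iio N)
    intro m hm
    by_contra h'
    simp only [Set.mem_Iio, not_lt] at h'
    apply hm
    have h2 : γ' y m = γ y m := if_neg (not_lt.mpr h')
    show γ' y m - γ y m = 0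
    rw [h2, sub_self]
  have key : ε (γ' y) = ε (γ y) := by
    have : ε (γ' y - γ y) = 0 := (QuotientAddGroup.eq_zero_iff _).mpr hdiff
    rw [map_sub, sub_eq_zero] at this
    exact this
  have hεγ : ε (γ y) = α' (f y) := congrFun (congrArg DFunLike.coe hγ) y
  show QuotientAddGroup.mk' S (β h) = α (h : G')
  calc QuotientAddGroup.mk' S (β h) = ε (β h) := rfl
    _ = ε (γ' y) := by rw [hβ]
    _ = α' (f y) := by rw [key, hεγ]
    _ = α (h : G') := by rw [hfy]; rfl
end

section
/- Let (G_n)_{n∈ℕ} be a sequence of abelian groups, let P = ∏_{n∈ℕ} G_n, let S ≤ P be the subgroup of finitely supported elements, and let ε : P → P/S be the quotient homomorphism. Then for every finitely generated subgroup F of P/S there exists a group homomorphism s : F → P such that ε(s(x)) = x for all x ∈ F; that is, the short exact sequence 0 → S → P → P/S → 0 splits when restricted to any finitely generated subgroup of P/S. -/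
open Submodule Set

/-- Linear combination map from `Fin k → ℤ` built from a family `f`. -/
def lcMap {M : Type*} [AddCommGroup M] {k : ℕ} (f : Fin k → M) :
    (Fin k → ℤ) →ₗ[ℤ] M where
  toFun c := ∑ i, c i • f i
  map_add' a b := by simp [add_smul, Finset.sum_add_distrib]
  map_smul' r a := by simp [mul_smul, Finset.smul_sum]

lemma lcMap_single {M : Type*} [AddCommGroup M] {k : ℕ} (f : Fin k → M) (i : Fin k) :
    lcMap f (Pi.single i 1) = f i := by
  simp only [lcMap, LinearMap.coe_mk, AddHom.coe_mk]
  rw [Finset.sum_eq_single i]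
  · simp
  · intro b _ hb; simp [Pi.single_apply, hb]
  · simp

lemma range_lcMap {M : Type*} [AddCommGroup M] {k : ℕ} (f : Fin k → M) :
    LinearMap.range (lcMap f) = span ℤ (Set.range f) := by
  apply le_antisymm
  · rintro x ⟨c, rfl⟩
    show (∑ i, c i • f i) ∈ span ℤ (Set.range f)
    exact Submodule.sum_mem _ fun i _ =>
      Submodule.smul_mem _ _ (subset_span (Set.mem_range_self i))
  · rw [span_le]
    rintro x ⟨i, rfl⟩
    exact ⟨Pi.single i 1, lcMap_single f i⟩

set_option maxHeartbeats 1000000 in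
/-- The quotient map from the product `∀ n, G n` onto its quotient by the
subgroup `S` of finitely supported elements admits a group-homomorphism section on every
finitely generated subgroup of the quotient. -/
theorem stmt2 (G : ℕ → Type*) [∀ n, AddCommGroup (G n)]
    (S : AddSubgroup (∀ n, G n))
    (hS : ∀ x : ∀ n, G n, x ∈ S ↔ {n | x n ≠ 0}.Finite)
    (F : AddSubgroup ((∀ n, G n) ⧸ S)) (hF : F.FG) :
    ∃ s : F →+ (∀ n, G n),
      ∀ x : F, QuotientAddGroup.mk' S (s x) = (x : (∀ n, G n) ⧸ S) := by
  classical
  set P := ∀ n, G n with hPdef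
  let ε : P →+ P ⧸ S := QuotientAddGroup.mk' S
  -- view F as a ℤ-submodule
  set M : Submodule ℤ (P ⧸ S) := AddSubgroup.toIntSubmodule F with hMdef
  have hMF : M.FG := by
    rw [Submodule.fg_iff_addSubgroup_fg]
    rwa [hMdef, AddSubgroup.toIntSubmodule_toAddSubgroup]
  obtain ⟨k, f, hf⟩ := Submodule.fg_iff_exists_fin_generating_family.mp hMF
  -- the surjection π : ℤ^k → M
  have hrange : LinearMap.range (lcMap f) = M := by rw [range_lcMap, hf]
  let π : (Fin k → ℤ) →ₗ[ℤ] M :=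
    (lcMap f).codRestrict M (fun c => hrange ▸ LinearMap.mem_range_self _ c)
  have hπ : Function.Surjective π := by
    rintro ⟨x, hx⟩
    rw [← hrange] at hx
    obtain ⟨c, hc⟩ := hx
    exact ⟨c, Subtype.ext hc⟩
  -- the kernel is finitely generated
  have hK : (LinearMap.ker π).FG := IsNoetherian.noetherian _
  obtain ⟨m, r, hr⟩ := Submodule.fg_iff_exists_fin_generating_family.mp hK
  -- lift generators
  have hlift : ∀ i, ∃ p : P, ε p = f i := fun i => QuotientAddGroup.mk'_surjective S (f i)
  choose p hp using hlift
  let Φ : (Fin k → ℤ) →ₗ[ℤ] P := lcMap p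
  -- ε ∘ Φ = lcMap f
  have hεΦ : ∀ c, ε (Φ c) = lcMap f c := by
    intro c
    simp only [Φ, lcMap, LinearMap.coe_mk, AddHom.coe_mk, map_sum]
    refine Finset.sum_congr rfl fun i _ => ?_
    rw [map_zsmul, hp]
  -- each Φ (r j) lies in S, hence has finite support
  have hΦr : ∀ j, Φ (r j) ∈ S := by
    intro j
    have hrj : r j ∈ LinearMap.ker π := by
      rw [← hr]; exact subset_span (Set.mem_range_self j)
    have : π (r j) = 0 := hrj
    have h0 : lcMap f (r j) = 0 := congrArg Subtype.val this
    have : ε (Φ (r j)) = 0 := by rw [hεΦ, h0]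
    rwa [← QuotientAddGroup.eq_zero_iff (Φ (r j))]
  -- the finite bad set T
  let T : Set ℕ := ⋃ j, {n | Φ (r j) n ≠ 0}
  have hT : T.Finite := Set.finite_iUnion fun j => (hS _).mp (hΦr j)
  -- zeroing map on T
  let z : P →ₗ[ℤ] P :=
    { toFun := fun x n => if n ∈ T then 0 else x n
      map_add' := fun a b => by
        funext n
        show (if n ∈ T then 0 else (a + b) n) =
          (if n ∈ T then 0 else a n) + (if n ∈ T then 0 else b n)
        by_cases h : n ∈ T <;> simp [h] <;> rfl
      map_smul' := fun c a => by
        funext n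
        show (if n ∈ T then 0 else (c • a) n) = c • (if n ∈ T then 0 else a n)
        by_cases h : n ∈ T <;> simp [h] <;> rfl }
  have hzS : ∀ x : P, z x - x ∈ S := by
    intro x
    rw [hS]
    apply hT.subset
    intro n hn
    simp only [Set.mem_setOf_eq] at hn
    by_contra h
    exact hn (show (if n ∈ T then 0 else x n) - x n = 0 by rw [if_neg h, sub_self])
  let Ψ : (Fin k → ℤ) →ₗ[ℤ] P := z ∘ₗ Φ
  have hKΨ : LinearMap.ker π ≤ LinearMap.ker Ψ := by
    rw [← hr, span_le]
    rintro c ⟨j, rfl⟩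
    simp only [SetLike.mem_coe, LinearMap.mem_ker, Ψ, LinearMap.comp_apply]
    funext n
    show (if n ∈ T then 0 else Φ (r j) n) = (0 : P) n
    by_cases h : n ∈ T
    · rw [if_pos h]; rfl
    · have h0 : Φ (r j) n = 0 := by
        by_contra hne
        exact h (Set.mem_iUnion.mpr ⟨j, hne⟩)
      rw [if_neg h, h0]; rfl
  -- factor Ψ through the quotient and the first isomorphism theorem
  let e : ((Fin k → ℤ) ⧸ LinearMap.ker π) ≃ₗ[ℤ] M := π.quotKerEquivOfSurjective hπ
  let sLin : M →ₗ[ℤ] P := (Submodule.liftQ _ Ψ hKΨ) ∘ₗ (e.symm : M →ₗ[ℤ] _)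
  have key : ∀ c : Fin k → ℤ, sLin (π c) = Ψ c := by
    intro c
    have h1 : e (Submodule.Quotient.mk c) = π c := by
      simp only [e, LinearMap.quotKerEquivOfSurjective, LinearEquiv.trans_apply,
        LinearEquiv.ofTop_apply, LinearMap.quotKerEquivRange_apply_mk]
    have h2 : e.symm (π c) = Submodule.Quotient.mk c := by
      rw [← h1, LinearEquiv.symm_apply_apply]
    simp only [sLin, LinearMap.comp_apply, LinearEquiv.coe_coe, h2, Submodule.liftQ_apply]
  let incl : F →+ M := AddMonoidHom.mk' (fun x => ⟨(x : P ⧸ S), x.2⟩) (fun a b => rfl)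
  refine ⟨sLin.toAddMonoidHom.comp incl, ?_⟩
  intro x
  obtain ⟨c, hc⟩ := hπ ⟨(x : P ⧸ S), x.2⟩
  show QuotientAddGroup.mk' S (sLin ⟨(x : P ⧸ S), x.2⟩) = _
  rw [← hc, key]
  have : ε (Ψ c) = ε (Φ c) := by
    have := hzS (Φ c)
    rw [← QuotientAddGroup.eq_iff_sub_mem] at this
    exact this
  show ε (Ψ c) = _
  rw [this, hεΦ]
  exact congrArg Subtype.val hc
end

section
/- Let A be a unital C*-algebra, let p be a projection in A, and let a ∈ A with ‖a‖ ≤ 1, ‖a*a − p‖ < 1/16, and ‖aa* − p‖ < 1/16. Then there exists an element v ∈ A with v*v = p and vv* = p such that ‖v − p·a·p‖ < 2/7. -/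
open StarAlgebra in
private lemma commute_elemental' {A : Type*} [CStarAlgebra A] {x c : A} (h1 : Commute x c)
    (hc : IsSelfAdjoint c) {y : A} (hy : y ∈ elemental ℂ c) : Commute x y := by
  have hle : elemental ℂ c ≤ StarSubalgebra.centralizer ℂ {x} := by
    apply elemental.le_of_mem
    · have hset : (StarSubalgebra.centralizer ℂ {x} : Set A)
          = {z | x * z = z * x} ∩ {z | star x * z = z * star x} := by
        ext z
        simp only [SetLike.mem_coe, StarSubalgebra.mem_centralizer_iff, Set.mem_singleton_iff,
          forall_eq, Set.mem_inter_iff, Set.mem_setOf_eq]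
      rw [hset]
      exact ((isClosed_eq (continuous_mul_left x) (continuous_mul_right x)).inter
        (isClosed_eq (continuous_mul_left (star x)) (continuous_mul_right (star x))))
    · rw [StarSubalgebra.mem_centralizer_iff]
      rintro g rfl
      refine ⟨h1.eq, ?_⟩
      have := congrArg star h1.eq
      rw [star_mul, star_mul, hc.star_eq] at this
      exact this.symm
  have h2 := hle hy
  rw [StarSubalgebra.mem_centralizer_iff] at h2
  exact (h2 x rfl).1

open StarAlgebra in
private lemma cfc_mem_elemental' {A : Type*} [CStarAlgebra A] (c : A) [hc : IsStarNormal c]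
    (f : ℂ → ℂ) : cfc f c ∈ elemental ℂ c := by
  by_cases hf : ContinuousOn f (spectrum ℂ c)
  · rw [cfc_apply f c, cfcHom_eq_of_isStarNormal]
    exact ((continuousFunctionalCalculus c) _).2
  · rw [cfc_apply_of_not_continuousOn c hf]
    exact zero_mem _

private lemma commute_cfc' {A : Type*} [CStarAlgebra A] {x c : A} (h1 : Commute x c)
    (hc : IsSelfAdjoint c) (f : ℂ → ℂ) : Commute x (cfc f c) :=
  have : IsStarNormal c := hc.isStarNormal
  commute_elemental' h1 hc (cfc_mem_elemental' c f)

/-- If `p` is a projection in a unital C*-algebra and `‖a‖ ≤ 1` with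
`‖a*a − p‖ < 1/16` and `‖aa* − p‖ < 1/16`, then there is a partial isometry `v`
(a unitary of the corner `pAp`, i.e. `v*v = p = vv*`) with `‖v − p·a·p‖ < 2/7`. -/
theorem stmt7 {A : Type*} [NormedRing A] [StarRing A] [CStarRing A]
    [NormedAlgebra ℂ A] [StarModule ℂ A] [CompleteSpace A]
    (p a : A) (hp : star p = p) (hp2 : p * p = p)
    (ha : ‖a‖ ≤ 1)
    (h1 : ‖star a * a - p‖ < 1 / 16) (h2 : ‖a * star a - p‖ < 1 / 16) :
    ∃ v : A, star v * v = p ∧ v * star v = p ∧ ‖v - p * a * p‖ < 2 / 7 := by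
  letI : CStarAlgebra A := {}
  rcases subsingleton_or_nontrivial A with hA | hA
  · refine ⟨p, Subsingleton.elim _ _, Subsingleton.elim _ _, ?_⟩
    have : p - p * a * p = 0 := Subsingleton.elim _ _
    rw [this, norm_zero]; norm_num
  -- basic norms
  have hstar_a : ‖star a‖ ≤ 1 := by rwa [norm_star]
  have hpn : ‖p‖ ≤ 1 := by
    rcases eq_or_ne p 0 with h | h
    · simp [h]
    · have h' : ‖star p * p‖ = ‖p‖ * ‖p‖ := CStarRing.norm_star_mul_self
      rw [hp, hp2] at h'
      have hpos : 0 < ‖p‖ := norm_pos_iff.mpr h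
      nlinarith
  set b := p * a * p with hbdef
  have hbstar : star b = p * star a * p := by
    simp only [hbdef, star_mul, hp, mul_assoc]
  have hbnorm : ‖b‖ ≤ 1 := by
    calc ‖p * a * p‖ ≤ ‖p‖ * ‖a‖ * ‖p‖ :=
          (norm_mul_le _ _).trans (by gcongr; exact norm_mul_le _ _)
      _ ≤ 1 * 1 * 1 := by gcongr
      _ = 1 := by norm_num
  -- error estimates
  have key : ∀ x : A, ‖x‖ ≤ 1 → ‖x * star x - p‖ < 1/16 → ‖star x * x - p‖ < 1/16 →
      ‖(p * star x * p) * (p * x * p) - p‖ ≤ 3/16 := by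
    intro x hx hxx hsxx
    have hsx : ‖star x‖ ≤ 1 := by rwa [norm_star]
    have hxx' : ‖p - x * star x‖ ≤ 1/16 := by rw [norm_sub_rev]; exact hxx.le
    have hsxx' : ‖star x * x - p‖ ≤ 1/16 := hsxx.le
    have hE : star x * p * x - p
        = star x * (p - x * star x) * x + (star x * x) * (star x * x - p)
          + (star x * x - p) * p := by
      noncomm_ring [hp2]
    have hEnorm : ‖star x * p * x - p‖ ≤ 3/16 := by
      rw [hE]
      calc ‖star x * (p - x * star x) * x + (star x * x) * (star x * x - p)
            + (star x * x - p) * p‖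
          ≤ ‖star x * (p - x * star x) * x‖ + ‖(star x * x) * (star x * x - p)‖
            + ‖(star x * x - p) * p‖ :=
            (norm_add_le _ _).trans (by gcongr; exact norm_add_le _ _)
        _ ≤ ‖star x‖ * ‖p - x * star x‖ * ‖x‖ + ‖star x‖ * ‖x‖ * ‖star x * x - p‖
            + ‖star x * x - p‖ * ‖p‖ := by
            gcongr
            · exact (norm_mul_le _ _).trans (by gcongr; exact norm_mul_le _ _)
            · exact (norm_mul_le _ _).trans (by gcongr; exact norm_mul_le _ _)
            · exact norm_mul_le _ _
        _ ≤ 1 * (1/16) * 1 + 1 * 1 * (1/16) + (1/16) * 1 := by gcongr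
        _ = 3/16 := by norm_num
    have e1 : p * star x * p * (p * x * p) = p * (star x * p * x) * p := by
      calc p * star x * p * (p * x * p) = p * star x * (p * p) * (x * p) := by noncomm_ring
        _ = p * star x * p * (x * p) := by rw [hp2]
        _ = p * (star x * p * x) * p := by noncomm_ring
    have e2 : p * p * p = p := by rw [hp2, hp2]
    have hrw : p * (star x * p * x - p) * p = p * star x * p * (p * x * p) - p := by
      rw [mul_sub, sub_mul, ← e1, e2]
    rw [← hrw]
    calc ‖p * (star x * p * x - p) * p‖ ≤ ‖p‖ * ‖star x * p * x - p‖ * ‖p‖ :=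
          (norm_mul_le _ _).trans (by gcongr; exact norm_mul_le _ _)
      _ ≤ 1 * (3/16) * 1 := by gcongr
      _ = 3/16 := by norm_num
  have key1 : ‖star b * b - p‖ ≤ 3/16 := by
    have := key a ha h2 h1
    rwa [← hbstar, ← hbdef] at this
  have key2 : ‖b * star b - p‖ ≤ 3/16 := by
    have := key (star a) hstar_a (by rwa [star_star]) (by rwa [star_star])
    rw [star_star] at this
    rwa [← hbstar, ← hbdef] at this
  -- projections and corner relations
  set q := 1 - p with hqdef
  have hqstar : star q = q := by rw [hqdef, star_sub, star_one, hp]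
  have hq2 : q * q = q := by rw [hqdef]; noncomm_ring [hp2]
  have hpq : p * q = 0 := by rw [hqdef, mul_sub, mul_one, hp2, sub_self]
  have hqp : q * p = 0 := by rw [hqdef, sub_mul, one_mul, hp2, sub_self]
  have hpb : p * b = b := by rw [hbdef, ← mul_assoc, ← mul_assoc, hp2]
  have hbp : b * p = b := by rw [hbdef, mul_assoc, hp2]
  have hpbs : p * star b = star b := by rw [hbstar, ← mul_assoc, ← mul_assoc, hp2]
  have hbsp : star b * p = star b := by rw [hbstar, mul_assoc, hp2]
  have hbq : b * q = 0 := by rw [hqdef, mul_sub, mul_one, hbp, sub_self]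
  have hqb : q * b = 0 := by rw [hqdef, sub_mul, one_mul, hpb, sub_self]
  have hbsq : star b * q = 0 := by rw [hqdef, mul_sub, mul_one, hbsp, sub_self]
  have hqbs : q * star b = 0 := by rw [hqdef, sub_mul, one_mul, hpbs, sub_self]
  set c := star b * b + q with hcdef
  have hcsa : IsSelfAdjoint c := by
    rw [IsSelfAdjoint, hcdef, star_add, star_mul, star_star, hqstar]
  haveI hcn : IsStarNormal c := hcsa.isStarNormal
  have hc1 : ‖c - 1‖ ≤ 3/16 := by
    have hcr : c - 1 = star b * b - p := by rw [hcdef, hqdef]; abel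
    rw [hcr]; exact key1
  have hcq : c * q = q := by
    rw [hcdef, add_mul, mul_assoc, hbq, mul_zero, hq2, zero_add]
  have hqc : q * c = q := by
    rw [hcdef, mul_add, ← mul_assoc, hqbs, zero_mul, hq2, zero_add]
  have hpc : p * c = c * p := by
    rw [hcdef, mul_add, add_mul, ← mul_assoc, hpbs, hpq, hqp, mul_assoc, hbp]
  -- spectrum facts
  have hspec : ∀ z ∈ spectrum ℂ c, z = (z.re : ℂ) ∧ 13/16 ≤ z.re ∧ z.re ≤ 19/16 := by
    intro z hz
    have hre : z = (z.re : ℂ) := hcsa.mem_spectrum_eq_re hz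
    have hz1 : z - 1 ∈ spectrum ℂ (c - 1) := by
      have h := spectrum.sub_singleton_eq c (1 : ℂ)
      rw [map_one] at h
      rw [← h]
      exact Set.sub_mem_sub hz rfl
    have hnorm : ‖z - 1‖ ≤ 3/16 :=
      le_trans (spectrum.norm_le_norm_of_mem hz1) hc1
    have hre1 : |z.re - 1| ≤ 3/16 := by
      have : |(z - 1).re| ≤ ‖z - 1‖ := by
        exact Complex.abs_re_le_norm _
      simp only [Complex.sub_re, Complex.one_re] at this
      linarith
    rw [abs_le] at hre1
    exact ⟨hre, by constructor <;> linarith⟩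
  -- the inverse square root via cfc
  set f : ℂ → ℂ := fun z => ((Real.sqrt z.re)⁻¹ : ℝ) with hfdef
  have hfc : ContinuousOn f (spectrum ℂ c) := by
    intro z hz
    obtain ⟨-, hz1, -⟩ := hspec z hz
    have h0 : Real.sqrt z.re ≠ 0 := ne_of_gt (Real.sqrt_pos.mpr (by linarith))
    have hca : ContinuousAt f z := by
      apply Complex.continuous_ofReal.continuousAt.comp
      exact (Real.continuous_sqrt.continuousAt.comp Complex.continuous_re.continuousAt).inv₀ h0
    exact hca.continuousWithinAt
  set s := cfc f c with hsdef
  have hsstar : star s = s := by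
    rw [hsdef, ← cfc_star]
    apply cfc_congr
    intro z hz
    simp [hfdef, Complex.star_def, Complex.conj_ofReal]
  have hcs : Commute c s := commute_cfc' (Commute.refl c) hcsa f
  have hps : Commute p s := commute_cfc' hpc hcsa f
  have hqs : Commute q s := commute_cfc' (show q * c = c * q by rw [hqc, hcq]) hcsa f
  -- s * s * c = 1
  have hmul1 : cfc (fun z => f z * f z) c = s * s := cfc_mul f f c hfc hfc
  have hmul2 : cfc (fun z => f z * f z * z) c = cfc (fun z => f z * f z) c * cfc (fun z : ℂ => z) c :=
    cfc_mul _ _ c (hfc.mul hfc) continuous_id.continuousOn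
  rw [cfc_id' ℂ c, hmul1] at hmul2
  have htriv : cfc (fun z => f z * f z * z) c = 1 := by
    have hcongr : cfc (fun z => f z * f z * z) c = cfc (fun _ : ℂ => (1 : ℂ)) c := by
      apply cfc_congr
      intro z hz
      obtain ⟨hzre, hlo, hhi⟩ := hspec z hz
      have hrepos : (0:ℝ) < z.re := by linarith
      simp only [hfdef]
      rw [hzre]
      simp only [Complex.ofReal_re]
      norm_cast
      rw [← mul_inv, Real.mul_self_sqrt hrepos.le]
      exact inv_mul_cancel₀ (ne_of_gt hrepos)
    rw [hcongr, cfc_const_one ℂ c]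
  have hssc : s * s * c = 1 := by rw [← hmul2, htriv]
  have hcss : c * (s * s) = 1 := by
    rw [← mul_assoc, hcs.eq, mul_assoc, hcs.eq, ← mul_assoc, hssc]
  -- invertibility of d
  set d := b * star b + q with hddef
  have hd1 : ‖(1:A) - d‖ ≤ 3/16 := by
    have hdr : (1:A) - d = -(b * star b - p) := by rw [hddef, hqdef]; abel
    rw [hdr, norm_neg]; exact key2
  have hdunit : IsUnit d :=
    ⟨Units.oneSub (1 - d) (lt_of_le_of_lt hd1 (by norm_num)), by simp [Units.oneSub]⟩
  obtain ⟨u, hu⟩ := hdunit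
  have hdq : d * q = q := by
    rw [hddef, add_mul, mul_assoc, hbsq, mul_zero, hq2, zero_add]
  have hbc : b * c = d * b := by
    have e7 : b * c = b * (star b * b) := by rw [hcdef, mul_add, hbq, add_zero]
    have e8 : d * b = b * star b * b := by rw [hddef, add_mul, hqb, add_zero]
    rw [e7, e8, ← mul_assoc]
  have hbss : b * (s * s) = ↑u⁻¹ * b := by
    have h3 : d * (b * (s * s)) = d * (↑u⁻¹ * b) := by
      rw [← mul_assoc, ← hbc, mul_assoc, hcss, mul_one, ← mul_assoc, ← hu, u.mul_inv, one_mul]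
    have h4 : IsUnit d := ⟨u, hu⟩
    exact h4.mul_left_cancel h3
  refine ⟨b * s, ?_, ?_, ?_⟩
  · -- star v * v = p
    rw [star_mul, hsstar]
    have hre : s * star b * (b * s) = s * (star b * b) * s := by noncomm_ring
    rw [hre]
    have hsbb : star b * b = c - q := by rw [hcdef]; abel
    rw [hsbb]
    have e3 : s * c * s = 1 := by rw [mul_assoc, hcs.eq, ← mul_assoc, hssc]
    have e4 : s * q * s = q := by
      rw [mul_assoc, hqs.eq, ← mul_assoc]
      conv_lhs => rw [← hcq]
      rw [← mul_assoc, hssc, one_mul]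
    rw [mul_sub, sub_mul, e3, e4, hqdef, sub_sub_cancel]
  · -- v * star v = p
    rw [star_mul, hsstar]
    have hre : b * s * (s * star b) = b * (s * s) * star b := by noncomm_ring
    rw [hre, hbss, mul_assoc]
    have hbbs : b * star b = d - q := by rw [hddef]; abel
    rw [hbbs, mul_sub]
    have e5 : (↑u⁻¹ : A) * d = 1 := by rw [← hu]; exact u.inv_mul
    have e6 : (↑u⁻¹ : A) * q = q := by
      conv_lhs => rw [← hdq, ← mul_assoc]
      rw [e5, one_mul]
    rw [e5, e6, hqdef, sub_sub_cancel]
  · -- norm bound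
    have hs1 : s - 1 = cfc (fun z => f z - 1) c := by
      have h := cfc_sub (a := c) (f := f) (g := fun _ : ℂ => (1:ℂ)) hfc continuousOn_const
      rw [cfc_const_one ℂ c] at h
      rw [hsdef, ← h]
    have hsnorm : ‖s - 1‖ ≤ 1/7 := by
      rw [hs1]
      apply norm_cfc_le (by norm_num)
      intro z hz
      obtain ⟨hzre, hlo, hhi⟩ := hspec z hz
      have hsq1 : (7:ℝ)/8 ≤ Real.sqrt z.re := by
        rw [show (7:ℝ)/8 = Real.sqrt ((7/8)^2) by rw [Real.sqrt_sq (by norm_num)]]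
        apply Real.sqrt_le_sqrt; nlinarith
      have hsq2 : Real.sqrt z.re ≤ 8/7 := by
        rw [show (8:ℝ)/7 = Real.sqrt ((8/7)^2) by rw [Real.sqrt_sq (by norm_num)]]
        apply Real.sqrt_le_sqrt; nlinarith
      have hpos : (0:ℝ) < Real.sqrt z.re := lt_of_lt_of_le (by norm_num) hsq1
      have hinv1 : (Real.sqrt z.re)⁻¹ ≤ 8/7 := by
        have : (Real.sqrt z.re)⁻¹ ≤ ((7:ℝ)/8)⁻¹ := by gcongr
        rw [show ((7:ℝ)/8)⁻¹ = 8/7 by norm_num] at this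
        exact this
      have hinv2 : (7:ℝ)/8 ≤ (Real.sqrt z.re)⁻¹ := by
        have : ((8:ℝ)/7)⁻¹ ≤ (Real.sqrt z.re)⁻¹ := by gcongr
        rw [show ((8:ℝ)/7)⁻¹ = 7/8 by norm_num] at this
        exact this
      have hfz : f z - 1 = (((Real.sqrt z.re)⁻¹ - 1 : ℝ) : ℂ) := by
        rw [hfdef]; push_cast; ring
      rw [hfz, Complex.norm_real, Real.norm_eq_abs, abs_le]
      constructor <;> linarith
    have hfin : b * s - b = b * (s - 1) := by noncomm_ring
    rw [hfin]
    calc ‖b * (s - 1)‖ ≤ ‖b‖ * ‖s - 1‖ := norm_mul_le _ _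
      _ ≤ 1 * (1/7) := by gcongr
      _ < 2/7 := by norm_num
end
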